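/- Let χ₁, χ₂ be 1-cocycles for Γ with values in gl(n,ℂ) under Ad σ, and define ω(χ₁,χ₂) = −∑_{k=1}^g [ B(χ₁(#∂R/∂a_k), χ₂(a_k)) + B(χ₁(#∂R/∂b_k), χ₂(b_k)) ] with B(u,v)=tr(uv). Then ω(χ₁,χ₂) equals ∑_{k=1}^g [ B(χ₁(α_k), σ(R_{k−1})·χ₂(a_k)) − B(χ₁(β_k), σ(R_k)·χ₂(b_k)) ], where σ(γ)·X = σ(γ) X σ(γ)⁻¹. -/

import Mathlib

/-!
The cocycle identity gives `χ₁(x⁻¹y) − χ₁(x⁻¹) = σ(x)⁻¹ χ₁(y) σ(x)`, so each Fox-derivative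
term of `ω` is `∓ B(σ(x)⁻¹·χ₁(α_k or β_k), χ₂(·))`, and Ad-invariance of the trace form moves
the conjugation onto `χ₂`.
-/

namespace GoldmanDual

open scoped commutatorElement

variable {G : Type*} [Group G]

/-- Partial products `R_k = ∏_{i<k} [a_i, b_i]` (0-based, `R 0 = 1`). -/
def R (a b : ℕ → G) (k : ℕ) : G := (((List.range k).map fun i => ⁅a i, b i⁆)).prod

/-- Dual generator `α_k = R_{k-1} b_k⁻¹ R_k⁻¹`. -/
def α (a b : ℕ → G) (k : ℕ) : G := R a b k * (b k)⁻¹ * (R a b (k + 1))⁻¹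

/-- Dual generator `β_k = R_k a_k⁻¹ R_{k-1}⁻¹`. -/
def β (a b : ℕ → G) (k : ℕ) : G := R a b (k + 1) * (a k)⁻¹ * (R a b k)⁻¹

theorem trace_units_inv_conj_mul {m R : Type*} [Fintype m] [DecidableEq m] [CommSemiring R]
    (U : (Matrix m m R)ˣ) (u v : Matrix m m R) :
    Matrix.trace ((↑U⁻¹ : Matrix m m R) * u * (↑U : Matrix m m R) * v)
      = Matrix.trace (u * ((↑U : Matrix m m R) * v * (↑U⁻¹ : Matrix m m R))) := by
  rw [Matrix.mul_assoc, Matrix.mul_assoc, Matrix.trace_mul_comm]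
  simp only [Matrix.mul_assoc]

def IsAdCocycle {A : Type*} [Ring A] (σ : G →* Aˣ) (χ : G → A) : Prop :=
  ∀ γ₁ γ₂ : G, χ (γ₁ * γ₂) = χ γ₁ + (↑(σ γ₁) : A) * χ γ₂ * ↑(σ γ₁)⁻¹

theorem IsAdCocycle.map_inv_mul_sub_map_inv {A : Type*} [Ring A] {σ : G →* Aˣ} {χ : G → A}
    (hχ : IsAdCocycle σ χ) (x y : G) :
    χ (x⁻¹ * y) - χ x⁻¹ = (↑(σ x)⁻¹ : A) * χ y * ↑(σ x) := by
  rw [hχ, add_sub_cancel_left, map_inv, inv_inv]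

theorem IsAdCocycle.trace_map_inv_mul_sub_map_inv_mul {m R : Type*} [Fintype m] [DecidableEq m]
    [CommRing R] {σ : G →* (Matrix m m R)ˣ} {χ : G → Matrix m m R} (hχ : IsAdCocycle σ χ)
    (x y : G) (v : Matrix m m R) :
    Matrix.trace ((χ (x⁻¹ * y) - χ x⁻¹) * v)
      = Matrix.trace (χ y * ((↑(σ x) : Matrix m m R) * v * (↑(σ x)⁻¹ : Matrix m m R))) := by
  rw [hχ.map_inv_mul_sub_map_inv, trace_units_inv_conj_mul]

theorem goldman_form_dual_general {n : ℕ} (a b : ℕ → G) (g : ℕ)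
    (σ : G →* Matrix.GeneralLinearGroup (Fin n) ℂ)
    (χ₁ χ₂ : G → Matrix (Fin n) (Fin n) ℂ)
    (hχ₁ : ∀ γ₁ γ₂ : G, χ₁ (γ₁ * γ₂)
      = χ₁ γ₁ + (↑(σ γ₁) : Matrix (Fin n) (Fin n) ℂ) * χ₁ γ₂
          * (↑(σ γ₁)⁻¹ : Matrix (Fin n) (Fin n) ℂ)) :
    -(∑ k ∈ Finset.range g,
        (Matrix.trace ((χ₁ ((R a b k)⁻¹) - χ₁ ((R a b k)⁻¹ * α a b k)) * χ₂ (a k))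
          + Matrix.trace ((χ₁ ((R a b (k + 1))⁻¹ * β a b k)
              - χ₁ ((R a b (k + 1))⁻¹)) * χ₂ (b k))))
      = ∑ k ∈ Finset.range g,
          (Matrix.trace (χ₁ (α a b k)
              * ((↑(σ (R a b k)) : Matrix (Fin n) (Fin n) ℂ) * χ₂ (a k)
                  * (↑(σ (R a b k))⁻¹ : Matrix (Fin n) (Fin n) ℂ)))
            - Matrix.trace (χ₁ (β a b k)
                * ((↑(σ (R a b (k + 1))) : Matrix (Fin n) (Fin n) ℂ) * χ₂ (b k)
                    * (↑(σ (R a b (k + 1)))⁻¹ : Matrix (Fin n) (Fin n) ℂ)))) := by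
  have hχ : IsAdCocycle σ χ₁ := hχ₁
  rw [neg_eq_iff_eq_neg, ← Finset.sum_neg_distrib]
  refine Finset.sum_congr rfl fun k _ => ?_
  rw [← neg_sub (χ₁ _), neg_mul, Matrix.trace_neg, hχ.trace_map_inv_mul_sub_map_inv_mul,
    hχ.trace_map_inv_mul_sub_map_inv_mul]
  abel

/-- The Goldman form
`ω(χ₁,χ₂) = −∑ₖ [B(χ₁(#∂R/∂a_k), χ₂(a_k)) + B(χ₁(#∂R/∂b_k), χ₂(b_k))]`, with
`B(u,v) = tr(uv)`, `#∂R/∂a_k = R_{k−1}⁻¹ − R_{k−1}⁻¹α_k`, and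
`#∂R/∂b_k = R_k⁻¹β_k − R_k⁻¹` (the cocycle `χ₁` being extended ℤ-linearly to
the group ring), equals
`∑ₖ [B(χ₁(α_k), σ(R_{k−1})·χ₂(a_k)) − B(χ₁(β_k), σ(R_k)·χ₂(b_k))]`. -/
theorem goldman_form_dual {n : ℕ} (a b : ℕ → G) (g : ℕ) (hrel : R a b g = 1)
    (σ : G →* Matrix.GeneralLinearGroup (Fin n) ℂ)
    (χ₁ χ₂ : G → Matrix (Fin n) (Fin n) ℂ)
    (hχ₁ : ∀ γ₁ γ₂ : G, χ₁ (γ₁ * γ₂)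
      = χ₁ γ₁ + (↑(σ γ₁) : Matrix (Fin n) (Fin n) ℂ) * χ₁ γ₂
          * (↑(σ γ₁)⁻¹ : Matrix (Fin n) (Fin n) ℂ))
    (hχ₂ : ∀ γ₁ γ₂ : G, χ₂ (γ₁ * γ₂)
      = χ₂ γ₁ + (↑(σ γ₁) : Matrix (Fin n) (Fin n) ℂ) * χ₂ γ₂
          * (↑(σ γ₁)⁻¹ : Matrix (Fin n) (Fin n) ℂ)) :
    -(∑ k ∈ Finset.range g,
        (Matrix.trace ((χ₁ ((R a b k)⁻¹) - χ₁ ((R a b k)⁻¹ * α a b k)) * χ₂ (a k))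
          + Matrix.trace ((χ₁ ((R a b (k + 1))⁻¹ * β a b k)
              - χ₁ ((R a b (k + 1))⁻¹)) * χ₂ (b k))))
      = ∑ k ∈ Finset.range g,
          (Matrix.trace (χ₁ (α a b k)
              * ((↑(σ (R a b k)) : Matrix (Fin n) (Fin n) ℂ) * χ₂ (a k)
                  * (↑(σ (R a b k))⁻¹ : Matrix (Fin n) (Fin n) ℂ)))
            - Matrix.trace (χ₁ (β a b k)
                * ((↑(σ (R a b (k + 1))) : Matrix (Fin n) (Fin n) ℂ) * χ₂ (b k)
                    * (↑(σ (R a b (k + 1)))⁻¹ : Matrix (Fin n) (Fin n) ℂ)))) :=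
  goldman_form_dual_general a b g σ χ₁ χ₂ hχ₁

end GoldmanDual
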